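/- arXiv:2305.16550 — 6 statements merged into one kernel-verified Lean document; each statement's English description precedes it below -/
import Mathlib

section
/- For every n-vertex multigraph G (loops allowed, where a loop contributes 1 to the degree of its vertex) and every integer b ≥ 1, there exists a subgraph G' of G with at least one vertex such that the minimum degree of G' is at least 2^(-b) · (v(G')/n)^(1/b) · e(G)/v(G'), where v(G') is the number of vertices of G' and e(G) the number of edges of G. -/
open Finset Real

/-- For every `n`-vertex multigraph `G` (loops allowed, a loop contributing 1
to the degree of its vertex) and every integer `b ≥ 1`, there is a subgraph `G'` of `G`
(obtained by restricting to a nonempty vertex set `S`) whose minimum degree is at least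
`2^{-b} (v(G')/n)^{1/b} e(G)/v(G')`.  The multigraph is encoded by an index type `ι` of edges
together with the map `ends` sending an edge to its (unordered) pair of endpoints. -/
theorem multigraph_min_degree_subgraph
    {V : Type*} [Fintype V] [DecidableEq V] [Nonempty V]
    {ι : Type*} [Fintype ι] (ends : ι → Sym2 V) (b : ℕ) (hb : 1 ≤ b) :
    ∃ S : Finset V, S.Nonempty ∧ ∀ v ∈ S,
      (2 : ℝ) ^ (-(b : ℝ)) * ((S.card : ℝ) / (Fintype.card V : ℝ)) ^ ((1 : ℝ) / b) *
          ((Fintype.card ι : ℝ) / (S.card : ℝ)) ≤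
        ((Finset.univ.filter (fun i : ι => v ∈ ends i ∧ ends i ∈ S.sym2)).card : ℝ) := by
  classical
  obtain ⟨v₀⟩ := (inferInstance : Nonempty V)
  by_cases hm0 : Fintype.card ι = 0
  · refine ⟨{v₀}, Finset.singleton_nonempty v₀, fun v hv => ?_⟩
    have h1 : (Fintype.card ι : ℝ) = 0 := by simp [hm0]
    rw [h1]
    simp
  -- main case
  have hn1 : 1 ≤ Fintype.card V := Fintype.card_pos
  have hm1 : 1 ≤ Fintype.card ι := Nat.one_le_iff_ne_zero.mpr hm0
  set n : ℕ := Fintype.card V with hn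
  set m : ℕ := Fintype.card ι with hm
  set a : ℝ := 1 / (b : ℝ) with ha
  have hb0 : (0:ℝ) < b := by exact_mod_cast hb
  have ha0 : 0 < a := by positivity
  have ha1 : a ≤ 1 := by
    rw [ha, div_le_one hb0]; exact_mod_cast hb
  have hna : (0:ℝ) < (n:ℝ) ^ a := by
    apply Real.rpow_pos_of_pos; exact_mod_cast hn1
  set c : ℝ := 2 ^ (-(b:ℝ)) * ((n:ℝ) ^ a)⁻¹ * m with hc
  have h2b : (0:ℝ) < (2:ℝ) ^ (-(b:ℝ)) := Real.rpow_pos_of_pos (by norm_num) _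
  have hc0 : 0 ≤ c := by positivity
  set deg : Finset V → V → ℕ :=
    fun S v => (Finset.univ.filter (fun i : ι => v ∈ ends i ∧ ends i ∈ S.sym2)).card with hdeg
  set E : Finset V → ℕ :=
    fun S => (Finset.univ.filter (fun i : ι => ends i ∈ S.sym2)).card with hE
  set g : ℕ → ℝ := fun s => c * ∑ k ∈ Finset.range s, ((k:ℝ)+1) ^ (a-1) with hg
  -- key step inequality : x ≥ 1 → x^(a-1) ≤ b * (x^a - (x-1)^a)
  have step : ∀ x : ℝ, 1 ≤ x → x ^ (a-1) ≤ (b:ℝ) * (x ^ a - (x-1) ^ a) := by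
    intro x hx
    have hx0 : (0:ℝ) < x := lt_of_lt_of_le one_pos hx
    have hber : (1 + (-1/x)) ^ a ≤ 1 + a * (-1/x) := by
      apply rpow_one_add_le_one_add_mul_self _ ha0.le ha1
      rw [neg_div, neg_le_neg_iff, div_le_one hx0]; exact hx
    have h1x : (1 + (-1/x)) = (x-1)/x := by field_simp; ring
    have hsplit : (x - 1) ^ a = x ^ a * ((x-1)/x) ^ a := by
      rw [← Real.mul_rpow hx0.le (div_nonneg (by linarith) hx0.le)]
      congr 1; field_simp
    have hxa : (0:ℝ) < x ^ a := Real.rpow_pos_of_pos hx0 _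
    have hkey : (x-1) ^ a ≤ x ^ a - a * x ^ (a-1) := by
      rw [hsplit, ← h1x]
      calc x ^ a * (1 + (-1/x)) ^ a ≤ x ^ a * (1 + a * (-1/x)) := by
            exact mul_le_mul_of_nonneg_left hber hxa.le
        _ = x ^ a - a * (x ^ a / x) := by ring
        _ = x ^ a - a * x ^ (a-1) := by rw [← Real.rpow_sub_one hx0.ne']
    have hba : (b:ℝ) * a = 1 := by rw [ha]; field_simp
    calc x ^ (a-1) = (b:ℝ) * (a * x ^ (a-1)) := by rw [← mul_assoc, hba, one_mul]
      _ ≤ (b:ℝ) * (x ^ a - (x-1) ^ a) := by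
          apply mul_le_mul_of_nonneg_left _ hb0.le
          linarith [hkey]
  -- telescoping bound
  have sumbound : ∀ N : ℕ, ∑ k ∈ Finset.range N, ((k:ℝ)+1) ^ (a-1) ≤ (b:ℝ) * (N:ℝ) ^ a := by
    intro N
    have h1 : ∑ k ∈ Finset.range N, ((k:ℝ)+1) ^ (a-1)
        ≤ ∑ k ∈ Finset.range N, (b:ℝ) * (((k:ℝ)+1) ^ a - (k:ℝ) ^ a) := by
      apply Finset.sum_le_sum
      intro k _
      have hk0 : (0:ℝ) ≤ (k:ℝ) := Nat.cast_nonneg k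
      have := step ((k:ℝ)+1) (by linarith)
      simpa using this
    have h2 : ∑ k ∈ Finset.range N, (((k:ℝ)+1) ^ a - (k:ℝ) ^ a) = (N:ℝ) ^ a := by
      have := Finset.sum_range_sub (fun k : ℕ => ((k:ℝ)) ^ a) N
      simp only [Nat.cast_succ] at this
      rw [this]
      simp [Real.zero_rpow ha0.ne']
    calc _ ≤ _ := h1
      _ = (b:ℝ) * ∑ k ∈ Finset.range N, (((k:ℝ)+1) ^ a - (k:ℝ) ^ a) := by
          rw [Finset.mul_sum]
      _ = (b:ℝ) * (N:ℝ) ^ a := by rw [h2]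
  -- key induction
  have key : ∀ s : ℕ, ∀ S : Finset V, S.card = s → g s < (E S : ℝ) →
      ∃ T : Finset V, T.Nonempty ∧ ∀ v ∈ T, c * (T.card : ℝ) ^ (a-1) ≤ (deg T v : ℝ) := by
    intro s
    induction s using Nat.strong_induction_on with
    | _ s ih =>
      intro S hcard hEb
      rcases s with _ | t
      · exfalso
        rw [Finset.card_eq_zero] at hcard
        subst hcard
        have hE0 : E (∅ : Finset V) = 0 := by
          rw [hE]
          simp only [Finset.card_eq_zero, Finset.filter_eq_empty_iff]
          intro i _
          rw [Finset.mem_sym2_iff]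
          push_neg
          exact ⟨(ends i).out.1, Sym2.out_fst_mem _, Finset.notMem_empty _⟩
        rw [hE0] at hEb
        simp only [hg, Finset.range_zero, Finset.sum_empty, mul_zero, Nat.cast_zero] at hEb
        exact absurd hEb (lt_irrefl 0)
      · have hSne : S.Nonempty := by
          rw [← Finset.card_pos, hcard]; omega
        by_cases hgood : ∀ v ∈ S, c * (S.card : ℝ) ^ (a-1) ≤ (deg S v : ℝ)
        · exact ⟨S, hSne, hgood⟩
        · push_neg at hgood
          obtain ⟨v, hvS, hvdeg⟩ := hgood
          set S' := S.erase v with hS'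
          have hcard' : S'.card = t := by
            rw [hS', Finset.card_erase_of_mem hvS, hcard]
            omega
          -- E S ≤ E S' + deg S v
          have hsplit : E S ≤ E S' + deg S v := by
            rw [hE, hdeg]
            have hsub : Finset.univ.filter (fun i : ι => ends i ∈ S.sym2)
                ⊆ (Finset.univ.filter (fun i : ι => ends i ∈ S'.sym2))
                  ∪ (Finset.univ.filter (fun i : ι => v ∈ ends i ∧ ends i ∈ S.sym2)) := by
              intro i hi
              simp only [Finset.mem_filter, Finset.mem_univ, true_and] at hi
              simp only [Finset.mem_union, Finset.mem_filter, Finset.mem_univ, true_and]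
              by_cases hv : v ∈ ends i
              · exact Or.inr ⟨hv, hi⟩
              · left
                rw [Finset.mem_sym2_iff] at hi ⊢
                intro y hy
                rw [hS', Finset.mem_erase]
                exact ⟨fun h => hv (h ▸ hy), hi y hy⟩
            calc _ ≤ _ := Finset.card_le_card hsub
              _ ≤ _ := Finset.card_union_le _ _
          have hgdecomp : g (t+1) = g t + c * ((S.card : ℝ)) ^ (a-1) := by
            rw [hg]
            simp only [Finset.sum_range_succ, mul_add, hcard]
            push_cast
            ring
          have hEb' : g t < (E S' : ℝ) := by
            have h1 : (E S : ℝ) ≤ (E S' : ℝ) + (deg S v : ℝ) := by exact_mod_cast hsplit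
            have := hEb
            rw [hgdecomp] at this
            linarith
          exact ih t (Nat.lt_succ_self t) S' hcard' hEb'
  -- apply key to univ
  have hEuniv : E (Finset.univ : Finset V) = m := by
    have hfil : Finset.univ.filter (fun i : ι => ends i ∈ (Finset.univ : Finset V).sym2)
        = Finset.univ :=
      Finset.filter_true_of_mem (fun i _ => by
        rw [Finset.mem_sym2_iff]; exact fun y _ => Finset.mem_univ y)
    rw [hE, hm]
    simp only [hfil]
    exact Finset.card_univ
  have hb2 : (b:ℝ) * (2:ℝ) ^ (-(b:ℝ)) ≤ 1/2 := by
    have hnat : b ≤ 2 ^ (b - 1) := by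
      have := Nat.lt_two_pow_self (n := b - 1)
      omega
    have h2 : (2:ℝ) ^ (-(b:ℝ)) = ((2:ℝ) ^ b)⁻¹ := by
      rw [Real.rpow_neg (by norm_num), Real.rpow_natCast]
    rw [h2]
    rw [mul_inv_le_iff₀ (by positivity)]
    have : (2:ℝ) ^ b = 2 * 2 ^ (b-1) := by
      nth_rewrite 1 [← Nat.sub_add_cancel hb]
      rw [pow_succ]
      ring
    rw [this]
    have : (b:ℝ) ≤ (2:ℝ) ^ (b-1) := by exact_mod_cast hnat
    linarith
  have hgn : g n < (E (Finset.univ : Finset V) : ℝ) := by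
    rw [hEuniv]
    have h1 : g n ≤ c * ((b:ℝ) * (n:ℝ) ^ a) := by
      rw [hg]
      exact mul_le_mul_of_nonneg_left (sumbound n) hc0
    have h2 : c * ((b:ℝ) * (n:ℝ) ^ a) = (b:ℝ) * (2:ℝ) ^ (-(b:ℝ)) * m := by
      rw [hc]; field_simp
    have hm1' : (1:ℝ) ≤ m := by exact_mod_cast hm1
    calc g n ≤ (b:ℝ) * (2:ℝ) ^ (-(b:ℝ)) * m := by rw [← h2]; exact h1
      _ ≤ (1/2) * m := by
          apply mul_le_mul_of_nonneg_right hb2 (by positivity)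
      _ < m := by linarith
  obtain ⟨T, hTne, hTdeg⟩ := key n Finset.univ (Finset.card_univ) hgn
  refine ⟨T, hTne, fun v hv => ?_⟩
  have hT1 : (1:ℝ) ≤ (T.card : ℝ) := by
    exact_mod_cast Finset.card_pos.mpr hTne
  have hT0 : (0:ℝ) < (T.card : ℝ) := lt_of_lt_of_le one_pos hT1
  have hLHS : (2 : ℝ) ^ (-(b : ℝ)) * ((T.card : ℝ) / (n : ℝ)) ^ ((1 : ℝ) / b) *
      ((m : ℝ) / (T.card : ℝ)) = c * (T.card : ℝ) ^ (a-1) := by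
    rw [← ha, Real.div_rpow hT0.le (by positivity), Real.rpow_sub hT0, Real.rpow_one, hc]
    field_simp
  calc _ = c * (T.card : ℝ) ^ (a-1) := hLHS
    _ ≤ (deg T v : ℝ) := hTdeg v hv
end

section
/- Let B be a finite nonempty set and f : B → ℤ≥0 any function. For every real b > 1 there exists a nonempty subset B' ⊆ B such that min_{y ∈ B'} f(y) ≥ 2^(-b) · (|B'|/|B|)^(1/b) · (Σ_{y∈B} f(y)) / |B'|. -/
open Real Finset

/-- Key concavity step: for `x ≥ 1` and `0 < p ≤ 1`, `p * x^(p-1) ≤ x^p - (x-1)^p`. -/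
lemma key_step {x p : ℝ} (hx : 1 ≤ x) (hp0 : 0 < p) (hp1 : p ≤ 1) :
    p * x ^ (p - 1) ≤ x ^ p - (x - 1) ^ p := by
  have hx0 : 0 < x := lt_of_lt_of_le one_pos hx
  have h1 : x - 1 = x * (1 + (-(1/x))) := by field_simp; ring
  have hs : (-1 : ℝ) ≤ -(1/x) := by
    rw [neg_le_neg_iff]
    exact div_le_one_of_le₀ hx (le_of_lt hx0)
  have hbern : (1 + (-(1/x))) ^ p ≤ 1 + p * (-(1/x)) :=
    rpow_one_add_le_one_add_mul_self hs hp0.le hp1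
  have h2 : (x - 1) ^ p = x ^ p * (1 + (-(1/x))) ^ p := by
    rw [h1, Real.mul_rpow hx0.le (by linarith [div_le_one_of_le₀ hx hx0.le])]
  have hxp : 0 ≤ x ^ p := Real.rpow_nonneg hx0.le p
  have h3 : (x - 1) ^ p ≤ x ^ p * (1 + p * (-(1/x))) := by
    rw [h2]; exact mul_le_mul_of_nonneg_left hbern hxp
  have h4 : x ^ p * (1 + p * (-(1/x))) = x ^ p - p * x ^ (p - 1) := by
    have : x ^ (p - 1) = x ^ p / x := by
      rw [Real.rpow_sub hx0, Real.rpow_one]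
    rw [this]; field_simp; ring
  linarith [h3, h4 ▸ h3]

/-- Sum bound: `∑_{j=1}^{n} j^(p-1) ≤ b n^p` where `p = 1/b`, via telescoping. -/
lemma sum_bound {b : ℝ} (hb : 1 < b) (n : ℕ) :
    ∑ j ∈ Finset.range n, ((j + 1 : ℝ)) ^ (1 / b - 1) ≤ b * (n : ℝ) ^ (1 / b) := by
  have hb0 : 0 < b := lt_trans one_pos hb
  have hp0 : 0 < 1 / b := by positivity
  have hp1 : 1 / b ≤ 1 := by
    rw [div_le_one hb0]; linarith
  have hterm : ∀ j ∈ Finset.range n,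
      ((j + 1 : ℝ)) ^ (1 / b - 1) ≤ b * ((j + 1 : ℝ) ^ (1 / b)) - b * ((j : ℝ) ^ (1 / b)) := by
    intro j _
    have hx : (1 : ℝ) ≤ (j + 1 : ℝ) := by
      have := Nat.cast_nonneg (α := ℝ) j; linarith
    have hks := key_step hx hp0 hp1
    have hbpos : 0 < b := hb0
    calc ((j + 1 : ℝ)) ^ (1 / b - 1)
        = b * ((1/b) * ((j + 1 : ℝ)) ^ (1 / b - 1)) := by field_simp
      _ ≤ b * (((j+1:ℝ)) ^ (1/b) - (((j+1:ℝ)) - 1) ^ (1/b)) := by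
          apply mul_le_mul_of_nonneg_left hks hbpos.le
      _ = b * ((j + 1 : ℝ) ^ (1 / b)) - b * ((j : ℝ) ^ (1 / b)) := by
          rw [add_sub_cancel_right]; ring
  calc ∑ j ∈ Finset.range n, ((j + 1 : ℝ)) ^ (1 / b - 1)
      ≤ ∑ j ∈ Finset.range n, (b * ((j + 1 : ℝ) ^ (1 / b)) - b * ((j : ℝ) ^ (1 / b))) :=
        Finset.sum_le_sum hterm
    _ = b * ((n : ℝ) ^ (1 / b)) - b * ((0 : ℝ) ^ (1 / b)) := by
        have := Finset.sum_range_sub (fun j : ℕ => b * ((j : ℝ) ^ (1 / b))) n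
        simpa using this
    _ ≤ b * (n : ℝ) ^ (1 / b) := by
        rw [Real.zero_rpow (by positivity : (1:ℝ)/b ≠ 0)]
        simp

/-- For a finite nonempty set `B`, `f : B → ℕ`, and real `b > 1`, there is a
nonempty `B' ⊆ B` with `min_{y ∈ B'} f(y) ≥ 2^{-b} (|B'|/|B|)^{1/b} (∑_{y∈B} f(y))/|B'|`. -/
theorem exists_subset_min_large
    {α : Type*} [DecidableEq α] (B : Finset α) (hB : B.Nonempty)
    (f : α → ℕ) (b : ℝ) (hb : 1 < b) :
    ∃ B' ⊆ B, B'.Nonempty ∧ ∀ y ∈ B',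
      (2 : ℝ) ^ (-b) * ((B'.card : ℝ) / (B.card : ℝ)) ^ (1 / b) *
          ((∑ z ∈ B, (f z : ℝ)) / (B'.card : ℝ)) ≤ (f y : ℝ) := by
  have hb0 : 0 < b := lt_trans one_pos hb
  set S : ℝ := ∑ z ∈ B, (f z : ℝ) with hS
  have hS0 : 0 ≤ S := Finset.sum_nonneg fun z _ => Nat.cast_nonneg _
  set n : ℕ := B.card with hn
  have hnpos : 0 < n := Finset.card_pos.mpr hB
  have hnR : (0 : ℝ) < (n : ℝ) := by exact_mod_cast hnpos
  rcases eq_or_lt_of_le hS0 with hSz | hSpos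
  · -- S = 0: take B' = B
    refine ⟨B, le_refl B, hB, fun y hy => ?_⟩
    rw [← hSz]
    simp [mul_nonneg, Nat.cast_nonneg]
  · -- S > 0: contradiction argument
    by_contra hcon
    push_neg at hcon
    -- For every nonempty B' ⊆ B there is y ∈ B' with f y < c(B')
    have hgreedy : ∀ C : Finset α, C ⊆ B → C.Nonempty → ∃ y ∈ C,
        (f y : ℝ) < (2 : ℝ) ^ (-b) * ((C.card : ℝ) / (n : ℝ)) ^ (1 / b) * (S / (C.card : ℝ)) := by
      intro C hCB hCne
      obtain ⟨y, hy, hlt⟩ := hcon C hCB hCne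
      exact ⟨y, hy, hlt⟩
    set D : ℝ := (2 : ℝ) ^ (-b) * S / (n : ℝ) ^ (1 / b) with hD
    have hD0 : 0 ≤ D := by
      apply div_nonneg (mul_nonneg (Real.rpow_nonneg (by norm_num) _) hS0)
        (Real.rpow_nonneg hnR.le _)
    -- rewrite bound: c(k) = D * k^(1/b - 1) for k ≥ 1
    have hbound : ∀ k : ℕ, 0 < k →
        (2 : ℝ) ^ (-b) * ((k : ℝ) / (n : ℝ)) ^ (1 / b) * (S / (k : ℝ))
          = D * (k : ℝ) ^ (1 / b - 1) := by
      intro k hk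
      have hkR : (0 : ℝ) < (k : ℝ) := by exact_mod_cast hk
      rw [Real.div_rpow hkR.le hnR.le, Real.rpow_sub hkR, Real.rpow_one, hD]
      field_simp
    -- induction claim
    have hind : ∀ k : ℕ, ∀ C : Finset α, C ⊆ B → C.card = k →
        (∑ y ∈ C, (f y : ℝ)) ≤ D * ∑ j ∈ Finset.range k, ((j + 1 : ℝ)) ^ (1 / b - 1) := by
      intro k
      induction k with
      | zero =>
        intro C hCB hcard
        rw [Finset.card_eq_zero.mp hcard]
        simp
      | succ m ih =>
        intro C hCB hcard
        have hCne : C.Nonempty := Finset.card_pos.mp (hcard ▸ Nat.succ_pos m)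
        obtain ⟨y, hy, hlt⟩ := hgreedy C hCB hCne
        have herase : (C.erase y) ⊆ B := (Finset.erase_subset y C).trans hCB
        have hecard : (C.erase y).card = m := by
          rw [Finset.card_erase_of_mem hy, hcard]
          omega
        have hrec := ih (C.erase y) herase hecard
        have hsum : (∑ z ∈ C, (f z : ℝ)) = (f y : ℝ) + ∑ z ∈ C.erase y, (f z : ℝ) :=
          (Finset.add_sum_erase C (fun z => (f z : ℝ)) hy).symm
        rw [hsum, Finset.sum_range_succ, mul_add]
        have hclt : (f y : ℝ) ≤ D * ((m + 1 : ℝ)) ^ (1 / b - 1) := by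
          have := hbound (m + 1) (Nat.succ_pos m)
          rw [hcard] at hlt
          push_cast at this hlt ⊢
          linarith [this ▸ hlt]
        push_cast at hrec
        linarith
    have hfinal := hind n B (le_refl B) rfl
    have hsumb := sum_bound hb n
    have hchain : S ≤ D * (b * (n : ℝ) ^ (1 / b)) :=
      le_trans hfinal (mul_le_mul_of_nonneg_left hsumb hD0)
    have hDval : D * (b * (n : ℝ) ^ (1 / b)) = (2 : ℝ) ^ (-b) * b * S := by
      rw [hD]
      have hnp : (0 : ℝ) < (n : ℝ) ^ (1 / b) := Real.rpow_pos_of_pos hnR _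
      field_simp
    rw [hDval] at hchain
    -- 2^(-b) * b < 1 since b < 2^b
    have h2b : b < (2 : ℝ) ^ b := by
      have := one_add_mul_self_le_rpow_one_add (by norm_num : (-1:ℝ) ≤ 1) hb.le
      simp only [mul_one] at this
      calc b < 1 + b := by linarith
        _ ≤ (1 + 1 : ℝ) ^ b := this
        _ = (2 : ℝ) ^ b := by norm_num
    have h2bpos : (0 : ℝ) < (2 : ℝ) ^ b := Real.rpow_pos_of_pos (by norm_num) b
    have hlt1 : (2 : ℝ) ^ (-b) * b < 1 := by
      rw [Real.rpow_neg (by norm_num : (0:ℝ) ≤ 2), inv_mul_eq_div, div_lt_one h2bpos]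
      exact h2b
    nlinarith [hchain, hlt1, hSpos]
end

section
/- Let H be a hypergraph with hyperedges of size at most r, all of whose hyperedges are 'valid' sets, and let D be a codegree function such that deg_H(χ) ≤ D(χ_θ) for all valid χ. For any valid set χ and set ν disjoint from χ_θ with D(χ_θ ∪ ν) < ∞, the number of sets γ with γ_θ = ν such that deg_H(χ ∪ γ) ≥ D(χ_θ ∪ γ_θ) is at most 2^r · D(χ_θ)/D(χ_θ ∪ ν). -/
open Finset

/-- A subset `χ ⊆ V(F) × V(G)` is *valid* if each vertex of `F` and of `G` occurs in at most
one pair of `χ`, and `χ` respects edges: if `(w,z), (w',z') ∈ χ` and `ww' ∈ E(F)`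
then `zz' ∈ E(G)`. -/
def IsValidSet {α β : Type*} (F : SimpleGraph α) (G : SimpleGraph β)
    (χ : Finset (α × β)) : Prop :=
  (∀ ⦃w z z'⦄, (w, z) ∈ χ → (w, z') ∈ χ → z = z') ∧
  (∀ ⦃w w' z⦄, (w, z) ∈ χ → (w', z) ∈ χ → w = w') ∧
  (∀ ⦃w z w' z'⦄, (w, z) ∈ χ → (w', z') ∈ χ → F.Adj w w' → G.Adj z z')

/-- Let `H` be a hypergraph on `V(F) × V(G)` whose hyperedges are valid sets
of size `r = v(F)`, and let `D` be a codegree function with `deg_H(χ) ≤ D(χ_θ)` for all valid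
`χ`.  For a valid `χ` and `ν ⊆ V(F)` disjoint from `χ_θ` with `D(χ_θ ∪ ν) < ∞`, the number of
valid `γ` with `γ_θ = ν` and `deg_H(χ ∪ γ) ≥ D((χ ∪ γ)_θ)` is at most
`2^r · D(χ_θ)/D(χ_θ ∪ ν)`; equivalently (in `ℕ∞`, avoiding division),
`|J| · D(χ_θ ∪ ν) ≤ 2^r · D(χ_θ)`. -/
theorem link_set_bound {α β : Type*} [Fintype α] [Fintype β] [DecidableEq α] [DecidableEq β]
    (F : SimpleGraph α) (G : SimpleGraph β)
    (H : Finset (Finset (α × β)))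
    (hH : ∀ h ∈ H, IsValidSet F G h ∧ h.card = Fintype.card α)
    (D : Finset α → ℕ∞)
    (hgood : ∀ χ : Finset (α × β), IsValidSet F G χ →
      ((H.filter fun h => χ ⊆ h).card : ℕ∞) ≤ D (χ.image Prod.fst))
    (χ : Finset (α × β)) (hχ : IsValidSet F G χ)
    (ν : Finset α) (hdisj : Disjoint ν (χ.image Prod.fst))
    (hfin : D (χ.image Prod.fst ∪ ν) ≠ ⊤) :
    (Set.ncard {γ : Finset (α × β) | IsValidSet F G γ ∧ γ.image Prod.fst = ν ∧
        D ((χ ∪ γ).image Prod.fst) ≤ ((H.filter fun h => χ ∪ γ ⊆ h).card : ℕ∞)} : ℕ∞) *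
        D (χ.image Prod.fst ∪ ν) ≤
      2 ^ (Fintype.card α) * D (χ.image Prod.fst) := by
  classical
  set χθ := χ.image Prod.fst with hχθ
  set Jf : Finset (Finset (α × β)) :=
    Finset.univ.filter (fun γ => IsValidSet F G γ ∧ γ.image Prod.fst = ν ∧
        D ((χ ∪ γ).image Prod.fst) ≤ ((H.filter fun h => χ ∪ γ ⊆ h).card : ℕ∞)) with hJf
  have hset : {γ : Finset (α × β) | IsValidSet F G γ ∧ γ.image Prod.fst = ν ∧
      D ((χ ∪ γ).image Prod.fst) ≤ ((H.filter fun h => χ ∪ γ ⊆ h).card : ℕ∞)} = ↑Jf := by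
    ext γ; simp [hJf]
  rw [hset, Set.ncard_coe_finset]
  -- uniqueness of γ ⊆ h with given first projection
  have huniq : ∀ h ∈ H, ∀ γ γ' : Finset (α × β), γ ⊆ h → γ' ⊆ h →
      γ.image Prod.fst = ν → γ'.image Prod.fst = ν → γ = γ' := by
    have key : ∀ h ∈ H, ∀ γ γ' : Finset (α × β), γ ⊆ h → γ' ⊆ h →
        γ.image Prod.fst = ν → γ'.image Prod.fst = ν → γ ⊆ γ' := by
      intro h hh γ γ' hγ hγ' hi hi' p hp
      obtain ⟨w, z⟩ := p
      have hw : w ∈ γ'.image Prod.fst := by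
        rw [hi', ← hi]; exact Finset.mem_image_of_mem _ hp
      obtain ⟨⟨w', z'⟩, hm, he⟩ := Finset.mem_image.mp hw
      simp only at he
      subst he
      obtain ⟨h1, -, -⟩ := (hH h hh).1
      have : z = z' := h1 (hγ hp) (hγ' hm)
      subst this; exact hm
    intro h hh γ γ' hγ hγ' hi hi'
    exact Finset.Subset.antisymm (key h hh γ γ' hγ hγ' hi hi')
      (key h hh γ' γ hγ' hγ hi' hi)
  -- disjointness of links
  have hdisjoint : (Jf : Set (Finset (α × β))).PairwiseDisjoint
      (fun γ => H.filter fun h => χ ∪ γ ⊆ h) := by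
    intro γ hγ γ' hγ' hne
    simp only [Finset.mem_coe, hJf, Finset.mem_filter] at hγ hγ'
    refine Finset.disjoint_left.mpr ?_
    intro h hmem hmem'
    simp only [Finset.mem_filter] at hmem hmem'
    exact hne (huniq h hmem.1 γ γ'
      ((Finset.subset_union_right).trans hmem.2)
      ((Finset.subset_union_right).trans hmem'.2) hγ.2.2.1 hγ'.2.2.1)
  -- main chain
  have step1 : (Jf.card : ℕ∞) * D (χθ ∪ ν) ≤
      ∑ γ ∈ Jf, ((H.filter fun h => χ ∪ γ ⊆ h).card : ℕ∞) := by
    rw [← nsmul_eq_mul]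
    refine Finset.card_nsmul_le_sum _ _ _ ?_
    intro γ hγ
    simp only [hJf, Finset.mem_filter] at hγ
    have : (χ ∪ γ).image Prod.fst = χθ ∪ ν := by
      rw [Finset.image_union, hγ.2.2.1]
    rw [← this]
    exact hγ.2.2.2
  have step2 : ∑ γ ∈ Jf, ((H.filter fun h => χ ∪ γ ⊆ h).card : ℕ∞) =
      ((Jf.biUnion fun γ => H.filter fun h => χ ∪ γ ⊆ h).card : ℕ∞) := by
    rw [Finset.card_biUnion (fun x hx y hy hxy => hdisjoint hx hy hxy), Nat.cast_sum]
  have step3 : (Jf.biUnion fun γ => H.filter fun h => χ ∪ γ ⊆ h) ⊆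
      H.filter fun h => χ ⊆ h := by
    intro h hh
    obtain ⟨γ, -, hh⟩ := Finset.mem_biUnion.mp hh
    simp only [Finset.mem_filter] at hh ⊢
    exact ⟨hh.1, Finset.subset_union_left.trans hh.2⟩
  calc (Jf.card : ℕ∞) * D (χθ ∪ ν)
      ≤ ∑ γ ∈ Jf, ((H.filter fun h => χ ∪ γ ⊆ h).card : ℕ∞) := step1
    _ = ((Jf.biUnion fun γ => H.filter fun h => χ ∪ γ ⊆ h).card : ℕ∞) := step2
    _ ≤ ((H.filter fun h => χ ⊆ h).card : ℕ∞) := by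
        exact_mod_cast Nat.cast_le.mpr (Finset.card_le_card step3)
    _ ≤ D χθ := hgood χ hχ
    _ ≤ 2 ^ (Fintype.card α) * D χθ := by
        refine le_mul_of_one_le_left (by positivity) ?_
        exact one_le_pow_of_one_le' (by norm_num : (1:ℕ∞) ≤ 2) _
end

section
/- Let M > 0, s > 0, 0 < δ < 1, and let a_1, …, a_m be real numbers with s = Σ_j a_j and 1 ≤ a_j ≤ (1−δ)^j M for each j ∈ [m]. Then s·log s ≤ Σ_{j=1}^m a_j log a_j + C·M, where C is a constant depending only on δ. -/
/-- For `0 < δ < 1` there is a constant `C` (depending only on `δ`) such that: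
whenever `M > 0`, `s > 0`, and reals `a_1, …, a_m` satisfy `s = ∑ a_j` and
`1 ≤ a_j ≤ (1−δ)^j M` for each `j`, then `s log s ≤ ∑ a_j log a_j + C·M`. -/
theorem entropy_optimize (δ : ℝ) (hδ0 : 0 < δ) (hδ1 : δ < 1) :
    ∃ C : ℝ, ∀ (M s : ℝ) (m : ℕ) (a : ℕ → ℝ),
      0 < M → 0 < s →
      s = ∑ j ∈ Finset.Icc 1 m, a j →
      (∀ j ∈ Finset.Icc 1 m, 1 ≤ a j ∧ a j ≤ (1 - δ) ^ j * M) →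
      s * Real.log s ≤ (∑ j ∈ Finset.Icc 1 m, a j * Real.log (a j)) + C * M := by
  have hr0 : (0:ℝ) < 1 - δ := by linarith
  have hr1 : (1:ℝ) - δ < 1 := by linarith
  have hlogδ : Real.log δ ≤ 0 := Real.log_nonpos hδ0.le hδ1.le
  have hlogr : Real.log (1 - δ) ≤ 0 := Real.log_nonpos hr0.le hr1.le
  set K : ℝ := 1 - Real.log δ - Real.log (1 - δ) with hKdef
  have hK1 : (1:ℝ) ≤ K := by simp only [hKdef]; linarith
  refine ⟨K / δ ^ 2, ?_⟩
  intro M s m a hM hs hsum hb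
  have hsummable : Summable (fun j : ℕ => (1 - δ) ^ j) :=
    summable_geometric_of_lt_one hr0.le hr1
  have hgeom : ∑ j ∈ Finset.Icc 1 m, (1 - δ) ^ j ≤ 1 / δ := by
    calc ∑ j ∈ Finset.Icc 1 m, (1 - δ) ^ j ≤ ∑' j : ℕ, (1 - δ) ^ j :=
          Summable.sum_le_tsum _ (fun j _ => by positivity) hsummable
      _ = (1 - (1 - δ))⁻¹ := tsum_geometric_of_lt_one hr0.le hr1
      _ = 1 / δ := by rw [show (1:ℝ) - (1 - δ) = δ by ring, one_div]
  have hsM : s ≤ M / δ := by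
    rw [hsum]
    calc ∑ j ∈ Finset.Icc 1 m, a j ≤ ∑ j ∈ Finset.Icc 1 m, (1 - δ) ^ j * M :=
          Finset.sum_le_sum (fun j hj => (hb j hj).2)
      _ = (∑ j ∈ Finset.Icc 1 m, (1 - δ) ^ j) * M := by rw [Finset.sum_mul]
      _ ≤ (1 / δ) * M := mul_le_mul_of_nonneg_right hgeom hM.le
      _ = M / δ := by ring
  have hlogs : Real.log s ≤ Real.log M - Real.log δ := by
    calc Real.log s ≤ Real.log (M / δ) := Real.log_le_log hs hsM
      _ = Real.log M - Real.log δ := Real.log_div hM.ne' hδ0.ne'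
  have key : ∀ j ∈ Finset.Icc 1 m,
      a j * Real.log s ≤ a j * Real.log (a j) + (j : ℝ) * (1 - δ) ^ j * (K * M) := by
    intro j hj
    obtain ⟨hj1, hj2⟩ := hb j hj
    have hj1' : 1 ≤ j := (Finset.mem_Icc.mp hj).1
    have hj1r : (1:ℝ) ≤ (j:ℝ) := by exact_mod_cast hj1'
    have ha0 : 0 < a j := lt_of_lt_of_le one_pos hj1
    have hbpos : 0 < (1 - δ) ^ j * M := by positivity
    have hlogb : Real.log ((1 - δ) ^ j * M) = (j:ℝ) * Real.log (1 - δ) + Real.log M := by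
      rw [Real.log_mul (by positivity) hM.ne', Real.log_pow]
    -- Step 1 : a * (log b - log a) ≤ b - a
    have h1 : a j * (Real.log ((1 - δ) ^ j * M) - Real.log (a j)) ≤ (1 - δ) ^ j * M - a j := by
      have hlog := Real.log_le_sub_one_of_pos (show 0 < ((1 - δ) ^ j * M) / a j by positivity)
      rw [Real.log_div hbpos.ne' ha0.ne'] at hlog
      have h2 : a j * (Real.log ((1 - δ) ^ j * M) - Real.log (a j))
          ≤ a j * (((1 - δ) ^ j * M) / a j - 1) :=
        mul_le_mul_of_nonneg_left hlog ha0.le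
      have h3 : a j * (((1 - δ) ^ j * M) / a j - 1) = (1 - δ) ^ j * M - a j := by
        field_simp
      linarith
    -- Step 2 : a * (log s - log b) ≤ b * (-log δ - j log (1-δ))
    have hy : 0 ≤ -Real.log δ - (j:ℝ) * Real.log (1 - δ) := by nlinarith
    have h4 : a j * (Real.log s - Real.log ((1 - δ) ^ j * M))
        ≤ ((1 - δ) ^ j * M) * (-Real.log δ - (j:ℝ) * Real.log (1 - δ)) := by
      have hx : Real.log s - Real.log ((1 - δ) ^ j * M)
          ≤ -Real.log δ - (j:ℝ) * Real.log (1 - δ) := by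
        rw [hlogb]; linarith
      calc a j * (Real.log s - Real.log ((1 - δ) ^ j * M))
          ≤ a j * (-Real.log δ - (j:ℝ) * Real.log (1 - δ)) :=
            mul_le_mul_of_nonneg_left hx ha0.le
        _ ≤ ((1 - δ) ^ j * M) * (-Real.log δ - (j:ℝ) * Real.log (1 - δ)) :=
            mul_le_mul_of_nonneg_right hj2 hy
    -- Step 3 : b * (1 - log δ - j log (1-δ)) ≤ j * b * K
    have h5 : ((1 - δ) ^ j * M) * (1 - Real.log δ - (j:ℝ) * Real.log (1 - δ))
        ≤ (j:ℝ) * (1 - δ) ^ j * (K * M) := by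
      have hcoef : 1 - Real.log δ - (j:ℝ) * Real.log (1 - δ) ≤ (j:ℝ) * K := by
        simp only [hKdef]; nlinarith
      have hb0 : (0:ℝ) ≤ (1 - δ) ^ j * M := hbpos.le
      calc ((1 - δ) ^ j * M) * (1 - Real.log δ - (j:ℝ) * Real.log (1 - δ))
          ≤ ((1 - δ) ^ j * M) * ((j:ℝ) * K) := mul_le_mul_of_nonneg_left hcoef hb0
        _ = (j:ℝ) * (1 - δ) ^ j * (K * M) := by ring
    nlinarith [h1, h4, h5, ha0.le]
  have hjr : ∑ j ∈ Finset.Icc 1 m, (j:ℝ) * (1 - δ) ^ j ≤ 1 / δ ^ 2 := by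
    have hnorm : ‖(1 - δ : ℝ)‖ < 1 := by
      rw [Real.norm_eq_abs, abs_of_nonneg hr0.le]; exact hr1
    have hHS := hasSum_coe_mul_geometric_of_norm_lt_one hnorm
    calc ∑ j ∈ Finset.Icc 1 m, (j:ℝ) * (1 - δ) ^ j ≤ ∑' j : ℕ, (j:ℝ) * (1 - δ) ^ j :=
          Summable.sum_le_tsum _ (fun j _ => by positivity) hHS.summable
      _ = (1 - δ) / (1 - (1 - δ)) ^ 2 := hHS.tsum_eq
      _ = (1 - δ) / δ ^ 2 := by rw [show (1:ℝ) - (1 - δ) = δ by ring]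
      _ ≤ 1 / δ ^ 2 := by
          apply div_le_div_of_nonneg_right ?_ (by positivity) |>.trans_eq rfl
          · linarith
  have hKM : 0 ≤ K * M := mul_nonneg (by linarith) hM.le
  calc s * Real.log s = ∑ j ∈ Finset.Icc 1 m, a j * Real.log s := by
        rw [hsum, Finset.sum_mul]
    _ ≤ ∑ j ∈ Finset.Icc 1 m, (a j * Real.log (a j) + (j:ℝ) * (1 - δ) ^ j * (K * M)) :=
        Finset.sum_le_sum key
    _ = (∑ j ∈ Finset.Icc 1 m, a j * Real.log (a j))
        + (∑ j ∈ Finset.Icc 1 m, (j:ℝ) * (1 - δ) ^ j) * (K * M) := by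
        rw [Finset.sum_add_distrib, Finset.sum_mul]
    _ ≤ (∑ j ∈ Finset.Icc 1 m, a j * Real.log (a j)) + (1 / δ ^ 2) * (K * M) := by
        have := mul_le_mul_of_nonneg_right hjr hKM
        linarith
    _ = (∑ j ∈ Finset.Icc 1 m, a j * Real.log (a j)) + K / δ ^ 2 * M := by ring
end

section
/- Let G be a bipartite graph with bipartition S ∪ T and suppose every vertex of T has degree at least d in G, so that e(G) ≥ d·|T|. Then there exists a nonempty bipartite subgraph G' ⊆ G with parts S' ⊆ S, T' ⊆ T such that every vertex of T' has degree at least d/4 in G' and every vertex of S' has degree at least (d/4)·|T|/|S| in G'. -/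
set_option maxHeartbeats 1000000


/-- Let `G` be a finite bipartite graph with nonempty parts `S`, `T`
(edges encoded as a set `E ⊆ S × T`), and suppose every vertex of `T` has degree at least
`d > 0`.  Then there are `S' ⊆ S`, `T' ⊆ T` spanning a nonempty subgraph in which every vertex
of `T'` has degree at least `d/4` and every vertex of `S'` has degree at least
`(d/4)·|T|/|S|`. -/
theorem bipartite_degree_cleanup {α β : Type*} [DecidableEq α] [DecidableEq β]
    (S : Finset α) (T : Finset β) (E : Finset (α × β))
    (hS : S.Nonempty) (hT : T.Nonempty)
    (hE : ∀ e ∈ E, e.1 ∈ S ∧ e.2 ∈ T)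
    (d : ℝ) (hd : 0 < d)
    (hdeg : ∀ t ∈ T, d ≤ ((E.filter fun e => e.2 = t).card : ℝ)) :
    ∃ S' T', S' ⊆ S ∧ T' ⊆ T ∧
      (E.filter fun e => e.1 ∈ S' ∧ e.2 ∈ T').Nonempty ∧
      (∀ t ∈ T', d / 4 ≤ ((E.filter fun e => e.2 = t ∧ e.1 ∈ S').card : ℝ)) ∧
      (∀ s ∈ S', d / 4 * (T.card : ℝ) / (S.card : ℝ) ≤
        ((E.filter fun e => e.1 = s ∧ e.2 ∈ T').card : ℝ)) := by
  classical
  set c : ℝ := d / 4 * (T.card : ℝ) / (S.card : ℝ) with hc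
  have hS0 : (0:ℝ) < S.card := by exact_mod_cast Finset.card_pos.mpr hS
  have hT0 : (0:ℝ) < T.card := by exact_mod_cast Finset.card_pos.mpr hT
  have hc0 : 0 ≤ c := by positivity
  have hd4 : (0:ℝ) < d / 4 := by linarith
  -- potential function
  set Φ : Finset α × Finset β → ℝ := fun P =>
    ((E.filter fun e => e.1 ∈ P.1 ∧ e.2 ∈ P.2).card : ℝ)
      - c * P.1.card - (d/4) * P.2.card with hΦ
  have hne : (S.powerset ×ˢ T.powerset).Nonempty :=
    ⟨(S, T), by simp⟩
  obtain ⟨P, hPmem, hPmax⟩ := Finset.exists_max_image (S.powerset ×ˢ T.powerset) Φ hne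
  obtain ⟨hPS, hPT⟩ := Finset.mem_product.mp hPmem
  rw [Finset.mem_powerset] at hPS hPT
  set S' := P.1
  set T' := P.2
  -- splitting lemmas
  have splitT : ∀ (A : Finset α) (B : Finset β) (t : β), t ∈ B →
      (E.filter fun e => e.1 ∈ A ∧ e.2 ∈ B).card
        = (E.filter fun e => e.1 ∈ A ∧ e.2 ∈ B.erase t).card
          + (E.filter fun e => e.2 = t ∧ e.1 ∈ A).card := by
    intro A B t ht
    rw [← Finset.card_union_of_disjoint, ← Finset.filter_or]
    · congr 1
      apply Finset.filter_congr
      intro e _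
      simp only [Finset.mem_erase]
      constructor
      · rintro ⟨h1, h2⟩
        by_cases h : e.2 = t
        · exact Or.inr ⟨h, h1⟩
        · exact Or.inl ⟨h1, h, h2⟩
      · rintro (⟨h1, _, h2⟩ | ⟨h1, h2⟩)
        · exact ⟨h1, h2⟩
        · exact ⟨h2, h1 ▸ ht⟩
    · simp only [Finset.disjoint_left, Finset.mem_filter]
      rintro e ⟨-, -, h2⟩ ⟨-, h3, -⟩
      exact (Finset.mem_erase.mp h2).1 h3
  have splitS : ∀ (A : Finset α) (B : Finset β) (s : α), s ∈ A →
      (E.filter fun e => e.1 ∈ A ∧ e.2 ∈ B).card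
        = (E.filter fun e => e.1 ∈ A.erase s ∧ e.2 ∈ B).card
          + (E.filter fun e => e.1 = s ∧ e.2 ∈ B).card := by
    intro A B s hs
    rw [← Finset.card_union_of_disjoint, ← Finset.filter_or]
    · congr 1
      apply Finset.filter_congr
      intro e _
      simp only [Finset.mem_erase]
      constructor
      · rintro ⟨h1, h2⟩
        by_cases h : e.1 = s
        · exact Or.inr ⟨h, h2⟩
        · exact Or.inl ⟨⟨h, h1⟩, h2⟩
      · rintro (⟨⟨_, h1⟩, h2⟩ | ⟨h1, h2⟩)
        · exact ⟨h1, h2⟩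
        · exact ⟨h1 ▸ hs, h2⟩
    · simp only [Finset.disjoint_left, Finset.mem_filter]
      rintro e ⟨-, h1, -⟩ ⟨-, h3, -⟩
      exact (Finset.mem_erase.mp h1).1 h3
  -- Φ(S,T) is large
  have hfull : (E.filter fun e => e.1 ∈ S ∧ e.2 ∈ T) = E :=
    Finset.filter_true_of_mem (fun e he => hE e he)
  have hEcard : d * T.card ≤ (E.card : ℝ) := by
    have hsum : E.card = ∑ t ∈ T, (E.filter fun e => e.2 = t).card :=
      Finset.card_eq_sum_card_fiberwise (fun e he => (hE e he).2)
    have : d * T.card = ∑ _t ∈ T, d := by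
      rw [Finset.sum_const, nsmul_eq_mul, mul_comm]
    rw [this, hsum]
    push_cast
    exact Finset.sum_le_sum hdeg
  have hcS : c * S.card = d / 4 * T.card := by
    rw [hc, div_mul_cancel₀ _ hS0.ne']
  have hΦfull : d / 2 * T.card ≤ Φ (S, T) := by
    simp only [hΦ, hfull]
    rw [hcS]
    linarith
  have hΦP : d / 2 * T.card ≤ Φ P := hΦfull.trans (hPmax (S, T) (by simp))
  have hΦPpos : 0 < Φ P := lt_of_lt_of_le (by positivity) hΦP
  refine ⟨S', T', hPS, hPT, ?_, ?_, ?_⟩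
  · rw [← Finset.card_pos]
    have h1 : 0 ≤ c * (S'.card : ℝ) := by positivity
    have h2 : 0 ≤ d / 4 * (T'.card : ℝ) := by positivity
    have : (0:ℝ) < ((E.filter fun e => e.1 ∈ S' ∧ e.2 ∈ T').card : ℝ) := by
      have := hΦPpos
      simp only [hΦ] at this
      nlinarith
    exact_mod_cast this
  · intro t ht
    by_contra h
    push_neg at h
    have hmem : (S', T'.erase t) ∈ S.powerset ×ˢ T.powerset := by
      simp only [Finset.mem_product, Finset.mem_powerset]
      exact ⟨hPS, (Finset.erase_subset t T').trans hPT⟩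
    have hle := hPmax _ hmem
    have hcard := splitT S' T' t ht
    have hcardT : (T'.card : ℝ) = (T'.erase t).card + 1 := by
      rw [Finset.card_erase_of_mem ht]
      have : 1 ≤ T'.card := Finset.card_pos.mpr ⟨t, ht⟩
      rw [Nat.cast_sub this]
      ring
    simp only [hΦ] at hle
    rw [hcard] at hle
    push_cast at hle
    rw [hcardT] at hle
    nlinarith
  · intro s hs
    by_contra h
    push_neg at h
    have hmem : (S'.erase s, T') ∈ S.powerset ×ˢ T.powerset := by
      simp only [Finset.mem_product, Finset.mem_powerset]
      exact ⟨(Finset.erase_subset s S').trans hPS, hPT⟩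
    have hle := hPmax _ hmem
    have hcard := splitS S' T' s hs
    have hcardS : (S'.card : ℝ) = (S'.erase s).card + 1 := by
      rw [Finset.card_erase_of_mem hs]
      have : 1 ≤ S'.card := Finset.card_pos.mpr ⟨s, hs⟩
      rw [Nat.cast_sub this]
      ring
    simp only [hΦ] at hle
    rw [hcard] at hle
    push_cast at hle
    rw [hcardS] at hle
    nlinarith
end

section
/- Let A = (A_0, …, A_t) be a tuple of vertex subsets of a graph G with A_0 = {x}, and let P be a set of paths x u_1 ⋯ u_t with u_i ∈ A_i, satisfying: for all 0 ≤ i < j ≤ t with (i,j) ≠ (0,t) and all u ∈ A_i, v ∈ A_j, the number of subpaths u_i ⋯ u_j of paths in P with u_i = u, u_j = v is at most L^{j−i−1}. Then for every y ∈ A_t and every nonempty S ⊆ V(G) \ {x, y} with |S| = r, the number of paths in P from x to y containing all vertices of S is at most c(t) · L^{t−1−r}, where c(t) depends only on t (one may take c(t) = r! · binom(t−1, r)). -/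
open scoped Classical

/-- The subpath `u_i ⋯ u_j` of a path `p = u_0 ⋯ u_t`, encoded as a partial function. -/
noncomputable def restrictPath {V : Type*} (t i j : ℕ) (p : Fin (t + 1) → V) :
    ℕ → Option V :=
  fun m => if h : m ≤ j - i ∧ i + m ≤ t then some (p ⟨i + m, Nat.lt_succ_of_le h.2⟩) else none

private lemma nat_sum_gaps {m t : ℕ} (d : Fin m → ℕ) (hd : ∀ k, 1 ≤ d k)
    (hsum : ∑ k, d k = t) : ∑ k, (d k - 1) = t - m := by
  have h1 : ∑ k : Fin m, (d k - 1) + ∑ _k : Fin m, 1 = ∑ k : Fin m, d k := by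
    rw [← Finset.sum_add_distrib]
    exact Finset.sum_congr rfl fun k _ => by have := hd k; omega
  simp only [Finset.sum_const, Finset.card_univ, Fintype.card_fin, smul_eq_mul, mul_one] at h1
  omega

private lemma fiber_bound {V : Type*} [Fintype V] [DecidableEq V]
    (t : ℕ) (L : ℝ) (hL : 0 < L)
    (P : Finset (Fin (t + 1) → V))
    (hbal : ∀ i j : Fin (t + 1), i < j → ¬(i = 0 ∧ j = Fin.last t) →
      ∀ u v : V,
        ((((P.filter fun p => p i = u ∧ p j = v).image (restrictPath t i.1 j.1)).card : ℝ)) ≤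
          L ^ (j.1 - i.1 - 1))
    (J : Finset (Fin (t + 1))) (h0J : (0 : Fin (t + 1)) ∈ J) (hlastJ : Fin.last t ∈ J)
    (hJ3 : 3 ≤ J.card)
    (w : Fin (t + 1) → V)
    (Q : Finset (Fin (t + 1) → V)) (hQP : Q ⊆ P)
    (hQw : ∀ p ∈ Q, ∀ i ∈ J, p i = w i) :
    (Q.card : ℝ) ≤ L ^ (t + 1 - J.card) := by
  obtain ⟨m, hm⟩ : ∃ m, J.card = m + 1 := ⟨J.card - 1, by omega⟩
  have hm2 : 2 ≤ m := by omega
  set e := J.orderIsoOfFin hm with he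
  set j : Fin (m + 1) → Fin (t + 1) := fun k => (e k : Fin (t + 1)) with hj
  have hjmono : StrictMono j := fun a b hab => Subtype.coe_lt_coe.mpr (e.strictMono hab)
  set a : Fin m → Fin (t + 1) := fun k => j k.castSucc with ha
  set b : Fin m → Fin (t + 1) := fun k => j k.succ with hb
  have hab : ∀ k, a k < b k := fun k => hjmono (Fin.castSucc_lt_succ : k.castSucc < k.succ)
  have haJ : ∀ k, a k ∈ J := fun k => (e k.castSucc).2
  have hbJ : ∀ k, b k ∈ J := fun k => (e k.succ).2
  have hj0 : j 0 = 0 := by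
    have h1 : j (e.symm ⟨0, h0J⟩) = 0 := by simp [hj]
    have h2 : j 0 ≤ j (e.symm ⟨0, h0J⟩) := hjmono.monotone (Fin.zero_le _)
    rw [h1] at h2
    exact Fin.le_zero_iff.mp h2
  have hjlast : j (Fin.last m) = Fin.last t := by
    have h1 : j (e.symm ⟨Fin.last t, hlastJ⟩) = Fin.last t := by simp [hj]
    have h2 : j (e.symm ⟨Fin.last t, hlastJ⟩) ≤ j (Fin.last m) := hjmono.monotone (Fin.le_last _)
    rw [h1] at h2
    exact le_antisymm (Fin.le_last _) h2
  have hne : ∀ k : Fin m, ¬(a k = 0 ∧ b k = Fin.last t) := by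
    rintro k ⟨h1, h2⟩
    have e1 : k.castSucc = 0 := hjmono.injective (h1.trans hj0.symm)
    have e2 : k.succ = Fin.last m := hjmono.injective (h2.trans hjlast.symm)
    have v1 : (k.castSucc : Fin (m + 1)).1 = 0 := by rw [e1]; rfl
    have v2 : (k.succ : Fin (m + 1)).1 = m := by rw [e2]; rfl
    simp only [Fin.coe_castSucc, Fin.val_succ] at v1 v2
    omega
  -- sum of gaps
  set d : Fin m → ℕ := fun k => (b k).1 - (a k).1 with hd
  have hd1 : ∀ k, 1 ≤ d k := fun k => by
    have := hab k; rw [Fin.lt_def] at this; simp only [hd]; omega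
  set g : ℕ → ℕ := fun n => (j ⟨min n m, by omega⟩).1 with hg
  have hgmono : Monotone g := by
    intro n n' hnn'
    simp only [hg]
    exact hjmono.monotone (by simp only [Fin.mk_le_mk]; omega)
  have hga : ∀ k : Fin m, (a k).1 = g k.1 := by
    intro k
    have hmk : (⟨min k.1 m, by omega⟩ : Fin (m + 1)) = k.castSucc := by
      apply Fin.ext; simp only [Fin.coe_castSucc]; omega
    simp only [hg, ha, hmk]
  have hgb : ∀ k : Fin m, (b k).1 = g (k.1 + 1) := by
    intro k
    have hmk : (⟨min (k.1 + 1) m, by omega⟩ : Fin (m + 1)) = k.succ := by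
      apply Fin.ext; simp only [Fin.val_succ]; omega
    simp only [hg, hb, hmk]
  have hsum : ∑ k : Fin m, d k = t := by
    have h1 : ∑ k : Fin m, d k = ∑ k : Fin m, (g (k.1 + 1) - g k.1) :=
      Finset.sum_congr rfl fun k _ => by simp only [hd, hga k, hgb k]
    rw [h1, Fin.sum_univ_eq_sum_range (fun i => g (i + 1) - g i) m,
      Finset.sum_range_tsub hgmono]
    have hgm : g m = t := by
      simp only [hg]
      rw [show (⟨min m m, by omega⟩ : Fin (m + 1)) = Fin.last m from
        Fin.ext (by simp [Fin.last]), hjlast]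
      rfl
    have hg0 : g 0 = 0 := by
      simp only [hg]
      rw [show (⟨min 0 m, by omega⟩ : Fin (m + 1)) = 0 from Fin.ext (by simp), hj0]
      rfl
    omega
  have hexp : ∑ k : Fin m, (d k - 1) = t - m := nat_sum_gaps d hd1 hsum
  -- the injection
  set B : Fin m → Finset (ℕ → Option V) := fun k =>
    (P.filter fun p => p (a k) = w (a k) ∧ p (b k) = w (b k)).image
      (restrictPath t (a k).1 (b k).1) with hB
  set Φ : (Fin (t + 1) → V) → (Fin m → (ℕ → Option V)) := fun p k =>
    restrictPath t (a k).1 (b k).1 p with hΦ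
  have hmem : ∀ p ∈ Q, Φ p ∈ Fintype.piFinset B := by
    intro p hp
    rw [Fintype.mem_piFinset]
    intro k
    exact Finset.mem_image_of_mem _ (Finset.mem_filter.mpr ⟨hQP hp,
      hQw p hp _ (haJ k), hQw p hp _ (hbJ k)⟩)
  have hcover : ∀ i : Fin (t + 1), ∃ k : Fin m, (a k).1 ≤ i.1 ∧ i.1 ≤ (b k).1 := by
    intro i
    by_cases hit : i.1 = t
    · refine ⟨⟨m - 1, by omega⟩, ?_, ?_⟩
      · have := (a ⟨m - 1, by omega⟩).isLt; omega
      · have hsucc : (⟨m - 1, by omega⟩ : Fin m).succ = Fin.last m := by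
          ext; simp [Fin.last]; omega
        simp only [hb, hsucc, hjlast]; simp [Fin.last]; omega
    · set K := Finset.univ.filter (fun k : Fin (m + 1) => (j k).1 ≤ i.1) with hK
      have hKne : K.Nonempty := ⟨0, by simp [hK, hj0]⟩
      set k0 := K.max' hKne with hk0
      have hk0K : k0 ∈ K := K.max'_mem hKne
      have hk0le : (j k0).1 ≤ i.1 := (Finset.mem_filter.mp hk0K).2
      have hk0m : k0.1 < m := by
        by_contra h
        have hlk : k0 = Fin.last m := by apply Fin.ext; simp [Fin.last]; omega
        rw [hlk, hjlast] at hk0le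
        have := i.isLt
        simp [Fin.last] at hk0le
        omega
      refine ⟨⟨k0.1, hk0m⟩, ?_, ?_⟩
      · have hcs : (⟨k0.1, hk0m⟩ : Fin m).castSucc = k0 := by apply Fin.ext; simp
        show (j (⟨k0.1, hk0m⟩ : Fin m).castSucc).1 ≤ i.1
        rw [hcs]; exact hk0le
      · by_contra h
        push_neg at h
        have hmemK : (⟨k0.1, hk0m⟩ : Fin m).succ ∈ K := by
          simp only [hK, Finset.mem_filter, Finset.mem_univ, true_and]
          simp only [hb] at h; omega
        have hle := K.le_max' _ hmemK
        rw [← hk0] at hle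
        have : k0.1 + 1 ≤ k0.1 := by
          have := Fin.le_def.mp hle; simpa using this
        omega
  have hinj : Set.InjOn Φ Q := by
    intro p hp q hq hpq
    funext i
    obtain ⟨k, h1, h2⟩ := hcover i
    have h3 := congrFun (congrFun hpq k) (i.1 - (a k).1)
    have hcond : i.1 - (a k).1 ≤ (b k).1 - (a k).1 ∧ (a k).1 + (i.1 - (a k).1) ≤ t := by
      have := (b k).isLt; omega
    simp only [hΦ, restrictPath, dif_pos hcond, Option.some.injEq] at h3
    have h4 : (⟨(a k).1 + (i.1 - (a k).1), Nat.lt_succ_of_le hcond.2⟩ : Fin (t + 1)) = i := by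
      ext; simp; omega
    rwa [h4] at h3
  have hcard1 : (Q.card : ℝ) ≤ ∏ k : Fin m, ((B k).card : ℝ) := by
    have h := Finset.card_le_card_of_injOn Φ hmem hinj
    rw [Fintype.card_piFinset] at h
    exact_mod_cast h
  have hBk : ∀ k : Fin m, ((B k).card : ℝ) ≤ L ^ (d k - 1) := fun k =>
    hbal (a k) (b k) (hab k) (hne k) _ _
  calc (Q.card : ℝ) ≤ ∏ k : Fin m, ((B k).card : ℝ) := hcard1
    _ ≤ ∏ k : Fin m, L ^ (d k - 1) :=
        Finset.prod_le_prod (fun k _ => Nat.cast_nonneg _) (fun k _ => hBk k)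
    _ = L ^ (∑ k : Fin m, (d k - 1)) := Finset.prod_pow_eq_pow_sum _ _ _
    _ = L ^ (t + 1 - J.card) := by rw [hexp, hm]; congr 1; omega

/-- Let `A = (A_0, …, A_t)` with `A_0 = {x}` and let `P` be a set of paths
`x u_1 ⋯ u_t` with `u_i ∈ A_i`, such that for all `0 ≤ i < j ≤ t` with `(i,j) ≠ (0,t)` and all
`u, v`, the number of subpaths `u_i ⋯ u_j` of paths of `P` with `u_i = u`, `u_j = v` is at most
`L^{j−i−1}`.  Then for every `y ∈ A_t` and nonempty `S ⊆ V(G) \ {x,y}` with `|S| = r`, the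
number of paths in `P` from `x` to `y` containing all of `S` is at most
`r! · C(t−1, r) · L^{t−1−r}`. -/
theorem balanced_neighborhood_path_count {V : Type*} [Fintype V] [DecidableEq V]
    (G : SimpleGraph V) (x : V) (t : ℕ) (L : ℝ) (hL : 0 < L)
    (A : Fin (t + 1) → Finset V) (hA0 : A 0 = {x})
    (P : Finset (Fin (t + 1) → V))
    (hP : ∀ p ∈ P, p 0 = x ∧ Function.Injective p ∧ (∀ i, p i ∈ A i) ∧
      ∀ i : Fin t, G.Adj (p i.castSucc) (p i.succ))
    (hbal : ∀ i j : Fin (t + 1), i < j → ¬(i = 0 ∧ j = Fin.last t) →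
      ∀ u v : V,
        ((((P.filter fun p => p i = u ∧ p j = v).image (restrictPath t i.1 j.1)).card : ℝ)) ≤
          L ^ (j.1 - i.1 - 1))
    (y : V) (hy : y ∈ A (Fin.last t))
    (S : Finset V) (hS : S.Nonempty) (hxS : x ∉ S) (hyS : y ∉ S) :
    ((P.filter fun p => p (Fin.last t) = y ∧ ∀ s ∈ S, ∃ i, p i = s).card : ℝ) ≤
      (S.card.factorial * Nat.choose (t - 1) S.card : ℝ) * L ^ (t - 1 - S.card) := by
  classical
  set r := S.card with hr
  set T := P.filter (fun p => p (Fin.last t) = y ∧ ∀ s ∈ S, ∃ i, p i = s) with hT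
  set sig : (Fin (t + 1) → V) → V → Fin (t + 1) := fun p v =>
    if h : v ∈ S ∧ ∃ i, p i = v then h.2.choose else 0 with hsig
  have hsig_spec : ∀ (p : Fin (t + 1) → V), ∀ v ∈ S, (∃ i, p i = v) → p (sig p v) = v := by
    intro p v hv hex
    simp only [hsig]
    rw [dif_pos (⟨hv, hex⟩ : v ∈ S ∧ ∃ i, p i = v)]
    exact hex.choose_spec
  have hsig_zero : ∀ (p : Fin (t + 1) → V) (v : V), v ∉ S → sig p v = 0 := by
    intro p v hv
    simp only [hsig]
    rw [dif_neg (by tauto)]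
  have key : ∀ p ∈ T, ∀ s ∈ S, p (sig p s) = s := by
    intro p hp s hs
    exact hsig_spec p s hs ((Finset.mem_filter.mp hp).2.2 s hs)
  have hT1 : ∀ p ∈ T, 1 ≤ t := by
    intro p hp
    by_contra h
    have ht0 : t = 0 := by omega
    obtain ⟨s, hs⟩ := hS
    obtain ⟨i, hi⟩ := (Finset.mem_filter.mp hp).2.2 s hs
    have hpx : p 0 = x := (hP p (Finset.mem_filter.mp hp).1).1
    have : i = 0 := by subst ht0; apply Fin.ext; have := i.isLt; omega
    rw [this, hpx] at hi
    exact hxS (hi ▸ hs)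
  have hcard : T.card = ∑ f ∈ T.image sig, (T.filter fun p => sig p = f).card :=
    Finset.card_eq_sum_card_fiberwise (fun p hp => Finset.mem_image_of_mem _ hp)
  -- properties of functions in the image
  have hprops : ∀ f ∈ T.image sig, ∃ p₀ ∈ T, ∀ s ∈ S, p₀ (f s) = s := by
    intro f hf
    obtain ⟨p₀, hp₀T, hp₀f⟩ := Finset.mem_image.mp hf
    exact ⟨p₀, hp₀T, fun s hs => by rw [← hp₀f]; exact key p₀ hp₀T s hs⟩
  -- per-fiber bound
  have hfiber : ∀ f ∈ T.image sig, ((T.filter fun p => sig p = f).card : ℝ) ≤ L ^ (t - 1 - r) := by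
    intro f hf
    obtain ⟨p₀, hp₀T, hfs⟩ := hprops f hf
    obtain ⟨p₀', hp₀T', hp₀f⟩ := Finset.mem_image.mp hf
    have ht1 : 1 ≤ t := hT1 p₀ hp₀T
    have hp₀P : p₀ ∈ P := Finset.mem_filter.mp hp₀T |>.1
    obtain ⟨hp₀x, hp₀inj, hp₀A, -⟩ := hP p₀ hp₀P
    have hp₀y : p₀ (Fin.last t) = y := (Finset.mem_filter.mp hp₀T).2.1
    set J : Finset (Fin (t + 1)) := insert 0 (insert (Fin.last t) (S.image f)) with hJ
    have h0l : (0 : Fin (t + 1)) ≠ Fin.last t := by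
      intro h
      have := congrArg Fin.val h
      simp [Fin.last] at this
      omega
    have h0im : (0 : Fin (t + 1)) ∉ S.image f := by
      rw [Finset.mem_image]
      rintro ⟨s, hs, hfs0⟩
      have h1 : p₀ (0 : Fin (t + 1)) = s := by rw [← hfs0]; exact hfs s hs
      rw [hp₀x] at h1
      exact hxS (h1 ▸ hs)
    have hlim : (Fin.last t) ∉ S.image f := by
      rw [Finset.mem_image]
      rintro ⟨s, hs, hfs0⟩
      have h1 : p₀ (Fin.last t) = s := by rw [← hfs0]; exact hfs s hs
      rw [hp₀y] at h1
      exact hyS (h1 ▸ hs)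
    have hinjf : Set.InjOn f S := by
      intro s hs s' hs' h
      have h1 := hfs s hs
      rw [h, hfs s' hs'] at h1
      exact h1.symm
    have hJcard : J.card = r + 2 := by
      rw [hJ, Finset.card_insert_of_notMem (by simp [h0l, h0im]),
        Finset.card_insert_of_notMem hlim, Finset.card_image_of_injOn hinjf, ← hr]
    have hQsub : T.filter (fun p => sig p = f) ⊆ P := by
      intro p hp
      exact (Finset.mem_filter.mp (Finset.filter_subset _ _ hp)).1
    have hQw : ∀ p ∈ T.filter (fun p => sig p = f), ∀ i ∈ J, p i = p₀ i := by
      intro p hp i hi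
      have hpT : p ∈ T := Finset.filter_subset _ _ hp
      have hpf : sig p = f := (Finset.mem_filter.mp hp).2
      have hpP : p ∈ P := (Finset.mem_filter.mp hpT).1
      rcases Finset.mem_insert.mp hi with h | hi'
      · subst h
        rw [(hP p hpP).1, hp₀x]
      · rcases Finset.mem_insert.mp hi' with h | him
        · subst h
          rw [(Finset.mem_filter.mp hpT).2.1, hp₀y]
        · obtain ⟨s, hs, rfl⟩ := Finset.mem_image.mp him
          have h1 : p (sig p s) = s := key p hpT s hs
          rw [hpf] at h1
          rw [h1, hfs s hs]
    have hJ3 : 3 ≤ J.card := by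
      have h1 : 0 < S.card := Finset.card_pos.mpr hS
      rw [hJcard]; omega
    have hfb := fiber_bound t L hL P hbal J (Finset.mem_insert_self _ _)
      (by simp [hJ]) hJ3 p₀ _ hQsub hQw
    have hexp : t + 1 - J.card = t - 1 - r := by rw [hJcard]; omega
    rwa [hexp] at hfb
  -- the number of fibers
  have himagecard : (T.image sig).card ≤ r.factorial * Nat.choose (t - 1) r := by
    set E : Finset (↥S → Fin (t + 1)) := Finset.univ.filter
      (fun g => Function.Injective g ∧ ∀ s : ↥S, g s ≠ 0 ∧ g s ≠ Fin.last t) with hE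
    have step1 : (T.image sig).card ≤ E.card := by
      apply Finset.card_le_card_of_injOn (fun f => fun s : ↥S => f s.1)
      · intro f hf
        obtain ⟨p₀, hp₀T, hfs⟩ := hprops f hf
        have hp₀P : p₀ ∈ P := Finset.mem_filter.mp hp₀T |>.1
        obtain ⟨hp₀x, hp₀inj, hp₀A, -⟩ := hP p₀ hp₀P
        have hp₀y : p₀ (Fin.last t) = y := (Finset.mem_filter.mp hp₀T).2.1
        rw [hE, Finset.mem_coe, Finset.mem_filter]
        refine ⟨Finset.mem_univ _, ?_, ?_⟩
        · intro s s' h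
          apply Subtype.ext
          have h2 : f s.1 = f s'.1 := h
          have h1 := hfs s.1 s.2
          rw [h2, hfs s'.1 s'.2] at h1
          exact h1.symm
        · intro s
          constructor
          · intro h
            have h2 : f s.1 = 0 := h
            have h1 : p₀ (f s.1) = s.1 := hfs s.1 s.2
            rw [h2, hp₀x] at h1
            exact hxS (h1 ▸ s.2)
          · intro h
            have h2 : f s.1 = Fin.last t := h
            have h1 : p₀ (f s.1) = s.1 := hfs s.1 s.2
            rw [h2, hp₀y] at h1
            exact hyS (h1 ▸ s.2)
      · intro f hf g hg h
        funext v
        by_cases hv : v ∈ S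
        · exact congrFun h ⟨v, hv⟩
        · obtain ⟨p, -, hpf⟩ := Finset.mem_image.mp hf
          obtain ⟨q, -, hqf⟩ := Finset.mem_image.mp hg
          rw [← hpf, ← hqf, hsig_zero p v hv, hsig_zero q v hv]
    have step2 : E.card ≤ Fintype.card (↥S ↪ {i : Fin (t + 1) // i ≠ 0 ∧ i ≠ Fin.last t}) := by
      have hsub : E ⊆ Finset.univ.image
          (fun e : ↥S ↪ {i : Fin (t + 1) // i ≠ 0 ∧ i ≠ Fin.last t} =>
            fun s => (e s : Fin (t + 1))) := by
        intro g hg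
        obtain ⟨hginj, hgend⟩ := (Finset.mem_filter.mp hg).2
        exact Finset.mem_image.mpr ⟨⟨fun s => ⟨g s, hgend s⟩,
          fun s s' h => hginj (congrArg Subtype.val h)⟩, Finset.mem_univ _, rfl⟩
      calc E.card ≤ _ := Finset.card_le_card hsub
        _ ≤ _ := Finset.card_image_le
        _ = _ := Finset.card_univ
    have hint : Fintype.card {i : Fin (t + 1) // i ≠ 0 ∧ i ≠ Fin.last t} = t - 1 := by
      rw [Fintype.card_subtype]
      rcases Nat.eq_zero_or_pos t with ht | ht
      · subst ht; decide
      · have h0l : (0 : Fin (t + 1)) ≠ Fin.last t := by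
          intro h
          have := congrArg Fin.val h
          simp [Fin.last] at this
          omega
        have hflt : Finset.univ.filter (fun i : Fin (t + 1) => i ≠ 0 ∧ i ≠ Fin.last t)
            = Finset.univ \ {0, Fin.last t} := by
          ext i
          simp [not_or, and_comm]
        rw [hflt, Finset.card_sdiff_of_subset (by simp), Finset.card_univ, Fintype.card_fin]
        have h2 : ({0, Fin.last t} : Finset (Fin (t + 1))).card = 2 := by
          rw [Finset.card_insert_of_notMem (by simp [h0l]), Finset.card_singleton]
        omega
    have step3 : Fintype.card (↥S ↪ {i : Fin (t + 1) // i ≠ 0 ∧ i ≠ Fin.last t})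
        = (t - 1).descFactorial r := by
      rw [Fintype.card_embedding_eq, hint, Fintype.card_coe]
    calc (T.image sig).card ≤ _ := step1
      _ ≤ _ := step2
      _ = (t - 1).descFactorial r := step3
      _ = r.factorial * Nat.choose (t - 1) r := Nat.descFactorial_eq_factorial_mul_choose _ _
  -- assemble
  have hLpow : (0 : ℝ) ≤ L ^ (t - 1 - r) := le_of_lt (pow_pos hL _)
  calc ((T.card : ℕ) : ℝ)
      = ∑ f ∈ T.image sig, ((T.filter fun p => sig p = f).card : ℝ) := by
        rw [hcard]; push_cast; rfl
    _ ≤ ∑ _f ∈ T.image sig, L ^ (t - 1 - r) := Finset.sum_le_sum hfiber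
    _ = (T.image sig).card * L ^ (t - 1 - r) := by
        rw [Finset.sum_const, nsmul_eq_mul]
    _ ≤ (r.factorial * Nat.choose (t - 1) r : ℝ) * L ^ (t - 1 - r) := by
        apply mul_le_mul_of_nonneg_right _ hLpow
        exact_mod_cast himagecard
end
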